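/- Let H be a Hopf algebra and χ ∈ H⊗H a Hochschild 2-cocycle of the coalgebra H (i.e. χ₁₂ + (Δ⊗Id)(χ) = χ₂₃ + (Id⊗Δ)(χ)) with (Id⊗ε)(χ) = 0. Define γ := m(S⊗Id)(χ) = S(χⁱ)χᵢ ∈ H. Then b¹(γ) := 1⊗γ − Δ(γ) + γ⊗1 = χ + τ(S⊗S)(χ). In particular if τ(S⊗S)(χ) = χ and char(k) ≠ 2, then χ = b¹(γ/2) is a Hochschild 2-coboundary. -/

import Mathlib

/-!
Apply to the cocycle identity `b²χ = 0` the map `Φ(a ⊗ b ⊗ c) = (S b ⊗ S a) Δc - S(a) b ⊗ c`.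
Using `S(x₁) x₂ = ε(x)`, `(S(x₁) ⊗ 1) Δ(x₂) = 1 ⊗ x` and the anti-coalgebra property
`Δ ∘ S = τ (S ⊗ S) Δ`, one finds `Φ ∘ b² = b¹ ∘ m(S ⊗ id) - id - τ (S ⊗ S) + 1 ⊗ (ε ⊗ id)(-)`.
Contracting the middle leg of `b²χ` with `ε` gives `1 ⊗ (ε ⊗ id)χ = (id ⊗ ε)χ ⊗ 1`, which vanishes
by the normalization of `χ`; hence `b¹γ = χ + τ (S ⊗ S) χ`.
-/

open scoped TensorProduct

noncomputable section

variable (k H : Type*) [Field k] [Ring H] [HopfAlgebra k H]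

/-- leg embedding `a ⊗ b ↦ a ⊗ b ⊗ 1` into `H ⊗ (H ⊗ H)`. -/
def leg12 : H ⊗[k] H →ₐ[k] H ⊗[k] (H ⊗[k] H) :=
  Algebra.TensorProduct.map (AlgHom.id k H) Algebra.TensorProduct.includeLeft

/-- leg embedding `a ⊗ b ↦ 1 ⊗ a ⊗ b`. -/
def leg23 : H ⊗[k] H →ₐ[k] H ⊗[k] (H ⊗[k] H) :=
  Algebra.TensorProduct.includeRight

/-- leg embedding `a ⊗ b ↦ a ⊗ 1 ⊗ b`. -/
def leg13 : H ⊗[k] H →ₐ[k] H ⊗[k] (H ⊗[k] H) :=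
  Algebra.TensorProduct.map (AlgHom.id k H) Algebra.TensorProduct.includeRight

/-- `(Id ⊗ Δ)` as an algebra map `H ⊗ H → H ⊗ (H ⊗ H)`. -/
def idComul : H ⊗[k] H →ₐ[k] H ⊗[k] (H ⊗[k] H) :=
  Algebra.TensorProduct.map (AlgHom.id k H) (Bialgebra.comulAlgHom k H)

/-- `(Δ ⊗ Id)` as an algebra map `H ⊗ H → H ⊗ (H ⊗ H)` (after reassociation). -/
def comulId : H ⊗[k] H →ₐ[k] H ⊗[k] (H ⊗[k] H) :=
  (Algebra.TensorProduct.assoc k k k H H H).toAlgHom.comp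
    (Algebra.TensorProduct.map (Bialgebra.comulAlgHom k H) (AlgHom.id k H))

/-- the flip `a ⊗ b ↦ b ⊗ a` as an algebra map. -/
def swapT : H ⊗[k] H →ₐ[k] H ⊗[k] H := (Algebra.TensorProduct.comm k H H).toAlgHom

/-- A quasitriangular structure on the bialgebra `H`. -/
structure QT where
  R : H ⊗[k] H
  Rinv : H ⊗[k] H
  mul_inv : R * Rinv = 1
  inv_mul : Rinv * R = 1
  quasi_cocomm : ∀ h : H, swapT k H (Coalgebra.comul (R := k) h) * R = R * Coalgebra.comul (R := k) h
  hex1 : idComul k H R = leg13 k H R * leg12 k H R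
  hex2 : comulId k H R = leg13 k H R * leg23 k H R

/-- A pre-Cartier quasitriangular bialgebra structure on `H`. -/
structure PreCartier extends QT k H where
  χ : H ⊗[k] H
  chi_comm : ∀ h : H, χ * Coalgebra.comul (R := k) h = Coalgebra.comul (R := k) h * χ
  chi_hex1 : idComul k H χ = leg12 k H χ + leg12 k H Rinv * leg13 k H χ * leg12 k H R
  chi_hex2 : comulId k H χ = leg23 k H χ + leg23 k H Rinv * leg13 k H χ * leg23 k H R

open TensorProduct LinearMap WithConv
open Coalgebra (comul counit)
open Algebra.TensorProduct (includeLeft includeRight)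

section Bialgebra

variable {R A : Type*} [CommSemiring R]

variable (R A) in
def cobarDiff₁ [Ring A] [Bialgebra R A] : A →ₗ[R] A ⊗[R] A :=
  TensorProduct.mk R A A 1 - comul + (TensorProduct.mk R A A).flip 1

lemma cobarDiff₁_apply [Ring A] [Bialgebra R A] (a : A) :
    cobarDiff₁ R A a = (1 : A) ⊗ₜ[R] a - comul a + a ⊗ₜ[R] (1 : A) := rfl

variable [Semiring A] [Bialgebra R A]

variable (R A) in
def counitMiddle : A ⊗[R] (A ⊗[R] A) →ₗ[R] A ⊗[R] A :=
  ((TensorProduct.lid R A).toLinearMap ∘ₗ counit.rTensor A).lTensor A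

lemma counitMiddle_tmul (a : A) (t : A ⊗[R] A) :
    counitMiddle R A (a ⊗ₜ t) = a ⊗ₜ TensorProduct.lid R A (counit.rTensor A t) := rfl

lemma counitMiddle_assoc_tmul (t : A ⊗[R] A) (c : A) :
    counitMiddle R A (Algebra.TensorProduct.assoc R R R A A A (t ⊗ₜ c)) =
      TensorProduct.rid R A (counit.lTensor A t) ⊗ₜ c := by
  induction t using TensorProduct.induction_on with
  | zero => simp
  | add x y hx hy => simp only [add_tmul, map_add, hx, hy]
  | tmul x y => simp [counitMiddle_tmul, smul_tmul]

end Bialgebra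

namespace HopfAlgebra

variable {R A : Type*} [CommSemiring R]

local notation "ι₁" => AlgHom.toLinearMap (includeLeft (S := R) (A := A) (B := A))
local notation "ι₂" => AlgHom.toLinearMap (includeRight (R := R) (A := A) (B := A))

section Convolution

lemma mul'_comp_map_includeRight_includeLeft [Semiring A] [Algebra R A] (f g : A →ₗ[R] A) :
    mul' R (A ⊗[R] A) ∘ₗ map (ι₂ ∘ₗ f) (ι₁ ∘ₗ g) =
      (TensorProduct.comm R A A).toLinearMap ∘ₗ map f g := by
  ext; simp

lemma includeLeft_mul_includeRight [Semiring A] [Algebra R A] [Coalgebra R A] :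
    toConv ι₁ * toConv ι₂ = toConv (comul : A →ₗ[R] A ⊗[R] A) := by
  have h : mul' R (A ⊗[R] A) ∘ₗ map ι₁ ι₂ = .id := by ext; simp
  rw [LinearMap.convMul_def, ← comp_assoc, ofConv_toConv, ofConv_toConv, h, id_comp]

lemma algHom_comp_antipode_mul_algHom {B : Type*} [Semiring A] [HopfAlgebra R A] [Semiring B]
    [Algebra R B] (h : A →ₐ[R] B) :
    toConv (h.toLinearMap ∘ₗ antipode R) * toConv h.toLinearMap = 1 := by
  have h_distrib := algHom_comp_convMul_distrib h (toConv (antipode R)) (toConv LinearMap.id)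
  rw [LinearMap.antipode_mul_id, LinearMap.comp_id] at h_distrib
  ext a
  simp [← h_distrib]

variable [Semiring A] [HopfAlgebra R A]

/-- In the convolution algebra `Hom(A, A ⊗ A)`, `Δ = ι₁ * ι₂` and `τ (S ⊗ S) Δ = (ι₂ S) * (ι₁ S)`,
so `τ (S ⊗ S) Δ` is a left inverse of `Δ`, while `Δ ∘ S` is a right inverse. -/
theorem comul_comp_antipode :
    comul ∘ₗ antipode R =
      (TensorProduct.comm R A A).toLinearMap ∘ₗ map (antipode R) (antipode R) ∘ₗ comul := by
  have h_left_inv : toConv ((TensorProduct.comm R A A).toLinearMap ∘ₗ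
      map (antipode R) (antipode R) ∘ₗ (comul : A →ₗ[R] A ⊗[R] A)) * toConv comul = 1 := by
    rw [← comp_assoc, ← mul'_comp_map_includeRight_includeLeft, comp_assoc,
      ← ofConv_toConv comul, ← LinearMap.convMul_def, ← includeLeft_mul_includeRight, mul_assoc,
      ← mul_assoc (toConv (ι₁ ∘ₗ antipode R)), algHom_comp_antipode_mul_algHom, one_mul,
      algHom_comp_antipode_mul_algHom]
  exact congrArg ofConv (left_inv_eq_right_inv h_left_inv comul_right_inv).symm

lemma includeLeft_comp_antipode_mul_comul :
    toConv (ι₁ ∘ₗ antipode R) * toConv (comul : A →ₗ[R] A ⊗[R] A) = toConv ι₂ := by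
  rw [← includeLeft_mul_includeRight, ← mul_assoc, algHom_comp_antipode_mul_algHom, one_mul]

end Convolution

section Contraction

variable [Ring A] [HopfAlgebra R A]

variable (R A) in
def antipodeMulComul : A ⊗[R] A →ₗ[R] A ⊗[R] A :=
  mul' R (A ⊗[R] A) ∘ₗ map (ι₁ ∘ₗ antipode R) comul

lemma antipodeMulComul_tmul (b c : A) :
    antipodeMulComul R A (b ⊗ₜ c) = (antipode R b ⊗ₜ (1 : A)) * comul c := by
  simp [antipodeMulComul]

lemma antipodeMulComul_comul (b : A) : antipodeMulComul R A (comul b) = (1 : A) ⊗ₜ b :=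
  congr(ofConv $(includeLeft_comp_antipode_mul_comul (R := R) (A := A)) b)

variable (R A) in
/-- `a ⊗ b ⊗ c ↦ (S b ⊗ S a) Δc - S(a) b ⊗ c`. -/
def antipodeContraction : A ⊗[R] (A ⊗[R] A) →ₗ[R] A ⊗[R] A :=
  mul' R (A ⊗[R] A) ∘ₗ
    (map (ι₂ ∘ₗ antipode R) (antipodeMulComul R A) - map (ι₁ ∘ₗ antipode R) .id)

lemma antipodeContraction_tmul (a : A) (t : A ⊗[R] A) :
    antipodeContraction R A (a ⊗ₜ t) =
      ((1 : A) ⊗ₜ antipode R a) * antipodeMulComul R A t -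
        (antipode R a ⊗ₜ (1 : A)) * t := by
  simp [antipodeContraction]

lemma antipodeContraction_assoc_tmul (t : A ⊗[R] A) (c : A) :
    antipodeContraction R A (Algebra.TensorProduct.assoc R R R A A A (t ⊗ₜ c)) =
      TensorProduct.comm R A A (map (antipode R) (antipode R) t) * comul c -
        mul' R A (map (antipode R) .id t) ⊗ₜ c := by
  induction t using TensorProduct.induction_on with
  | zero => simp
  | add x y hx hy => simp only [add_tmul, map_add, hx, hy, add_mul]; abel
  | tmul x y => simp [antipodeContraction_tmul, antipodeMulComul_tmul, ← mul_assoc]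

end Contraction

end HopfAlgebra

open HopfAlgebra

section Cobar

def cobarDiff₂ : H ⊗[k] H →ₗ[k] H ⊗[k] (H ⊗[k] H) :=
  (leg23 k H).toLinearMap - (comulId k H).toLinearMap + (idComul k H).toLinearMap -
    (leg12 k H).toLinearMap

variable {k H}

theorem antipodeContraction_comp_cobarDiff₂ :
    antipodeContraction k H ∘ₗ cobarDiff₂ k H =
      cobarDiff₁ k H ∘ₗ mul' k H ∘ₗ map (antipode k) .id - .id -
        (TensorProduct.comm k H H).toLinearMap ∘ₗ map (antipode k) (antipode k) +
        TensorProduct.mk k H H 1 ∘ₗ (TensorProduct.lid k H).toLinearMap ∘ₗ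
          counit.rTensor H := by
  refine TensorProduct.ext' fun a b => ?_
  have h23 : antipodeContraction k H (leg23 k H (a ⊗ₜ b)) =
      antipodeMulComul k H (a ⊗ₜ b) - a ⊗ₜ b := by
    simp [leg23, antipodeContraction_tmul, ← Algebra.TensorProduct.one_def]
  have h_comulId : antipodeContraction k H (comulId k H (a ⊗ₜ b)) =
      comul (antipode k a * b) - counit (R := k) a • ((1 : H) ⊗ₜ b) := by
    have h_anti : comul (antipode k a) =
        TensorProduct.comm k H H (map (antipode k) (antipode k) (comul a)) :=
      LinearMap.congr_fun comul_comp_antipode a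
    simp [comulId, antipodeContraction_assoc_tmul, ← h_anti, ← rTensor_def,
      Algebra.algebraMap_eq_smul_one, smul_tmul']
  have h_idComul : antipodeContraction k H (idComul k H (a ⊗ₜ b)) =
      (1 : H) ⊗ₜ (antipode k a * b) - antipodeMulComul k H (a ⊗ₜ b) := by
    simp [idComul, antipodeContraction_tmul, antipodeMulComul_comul, antipodeMulComul_tmul]
  have h12 : antipodeContraction k H (leg12 k H (a ⊗ₜ b)) =
      antipode k b ⊗ₜ antipode k a - (antipode k a * b) ⊗ₜ (1 : H) := by
    simp [leg12, antipodeContraction_tmul, antipodeMulComul_tmul]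
  simp [cobarDiff₂, h23, h_comulId, h_idComul, h12, cobarDiff₁_apply]
  abel

theorem counitMiddle_comp_cobarDiff₂ :
    counitMiddle k H ∘ₗ cobarDiff₂ k H =
      TensorProduct.mk k H H 1 ∘ₗ (TensorProduct.lid k H).toLinearMap ∘ₗ counit.rTensor H -
        (TensorProduct.mk k H H).flip 1 ∘ₗ (TensorProduct.rid k H).toLinearMap ∘ₗ
          counit.lTensor H := by
  refine TensorProduct.ext' fun a b => ?_
  have h_comulId : counitMiddle k H (comulId k H (a ⊗ₜ b)) = a ⊗ₜ b := by
    simp [comulId, counitMiddle_assoc_tmul]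
  simp [cobarDiff₂, counitMiddle_tmul, leg12, leg23, idComul, h_comulId]

end Cobar

theorem two_cocycle_coboundary (χ : H ⊗[k] H)
    (hcocycle : leg12 k H χ + comulId k H χ = leg23 k H χ + idComul k H χ)
    (hcounit : LinearMap.lTensor H (Coalgebra.counit (R := k) (A := H)) χ = 0) :
    let S : H →ₗ[k] H := HopfAlgebra.antipode k
    let γ : H := LinearMap.mul' k H (TensorProduct.map S LinearMap.id χ)
    ((1 : H) ⊗ₜ[k] γ - Coalgebra.comul (R := k) γ + γ ⊗ₜ[k] (1 : H)
        = χ + TensorProduct.comm k H H (TensorProduct.map S S χ)) ∧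
      (TensorProduct.comm k H H (TensorProduct.map S S χ) = χ → (2 : k) ≠ 0 →
        χ = (1 : H) ⊗ₜ[k] ((2 : k)⁻¹ • γ) - Coalgebra.comul (R := k) ((2 : k)⁻¹ • γ)
          + ((2 : k)⁻¹ • γ) ⊗ₜ[k] (1 : H)) := by
  intro S γ
  have h_cocycle : cobarDiff₂ k H χ = 0 := by
    rw [← sub_eq_zero] at hcocycle
    rw [← neg_eq_zero, ← hcocycle]
    simp only [cobarDiff₂, LinearMap.sub_apply, LinearMap.add_apply, AlgHom.toLinearMap_apply]
    abel
  have h_counit_left : (1 : H) ⊗ₜ[k] TensorProduct.lid k H (counit.rTensor H χ) = 0 := by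
    simpa [h_cocycle, hcounit, sub_eq_zero] using
      (LinearMap.congr_fun counitMiddle_comp_cobarDiff₂ χ).symm
  have h_coboundary :
      cobarDiff₁ k H γ = χ + TensorProduct.comm k H H (TensorProduct.map S S χ) := by
    have h := LinearMap.congr_fun antipodeContraction_comp_cobarDiff₂ χ
    simp only [coe_comp, Function.comp_apply, h_cocycle, map_zero, LinearMap.add_apply,
      LinearMap.sub_apply, id_coe, id_eq, LinearEquiv.coe_coe, mk_apply, h_counit_left,
      add_zero] at h
    rw [eq_comm, sub_sub, sub_eq_zero] at h
    exact h
  refine ⟨h_coboundary, fun h_symm h_two => ?_⟩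
  rw [← cobarDiff₁_apply, map_smul, h_coboundary, h_symm, ← two_smul k χ, smul_smul,
    inv_mul_cancel₀ h_two, one_smul]
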